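/- Let n ≥ 1 and r ≥ 2 be integers and let s* be the minimum positive integer that does not divide n. Then the equitable chromatic threshold of the complete r-partite graph with all r parts of size n equals r·⌈n/s*⌉; that is, r·⌈n/s*⌉ is the least integer t such that this graph has an equitable k-coloring for every k ≥ t. -/
import Mathlib


/-- An equitable `k`-coloring of a finite graph `G`: a proper coloring with `k` colors
in which the sizes of any two color classes differ by at most one. -/
def HasEquitableColoring {V : Type} [Fintype V] (G : SimpleGraph V) (k : ℕ) : Prop :=
  ∃ C : G.Coloring (Fin k), ∀ c₁ c₂ : Fin k,
    (Finset.univ.filter fun v => C v = c₁).card ≤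
      (Finset.univ.filter fun v => C v = c₂).card + 1

open Finset

def kiF (k r i : ℕ) : ℕ := k / r + if i < k % r then 1 else 0
def offF (k r i : ℕ) : ℕ := i * (k / r) + min i (k % r)

lemma offF_succ (k r i : ℕ) : offF k r (i + 1) = offF k r i + kiF k r i := by
  simp only [offF, kiF, add_mul, one_mul]
  split_ifs with h <;> omega

lemma offF_mono (k r : ℕ) : Monotone (offF k r) :=
  monotone_nat_of_le_succ fun i => by rw [offF_succ]; omega

lemma offF_zero (k r : ℕ) : offF k r 0 = 0 := by simp [offF]

lemma offF_r (k r : ℕ) (hr : 0 < r) : offF k r r = k := by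
  have h1 := Nat.div_add_mod k r
  have h2 := Nat.mod_lt k hr
  have h3 : r * (k / r) = (k / r) * r := mul_comm _ _
  simp only [offF]
  omega

lemma kiF_pos (k r i : ℕ) (hr : 0 < r) (hk : r ≤ k) : 0 < kiF k r i := by
  have : 1 ≤ k / r := (Nat.one_le_div_iff hr).mpr hk
  simp only [kiF]; split_ifs <;> omega

lemma kiF_ge (k r i : ℕ) : k / r ≤ kiF k r i := by
  simp only [kiF]; split_ifs <;> omega


lemma card_filter_fin (n : ℕ) (p : ℕ → Prop) [DecidablePred p] :
    (Finset.univ.filter fun x : Fin n => p x.val).card = ((Finset.Iio n).filter p).card := by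
  rw [← Fin.map_valEmbedding_univ, Finset.filter_map, Finset.card_map]
  rfl

lemma card_filter_sigma {r n : ℕ} (p : (Σ _ : Fin r, Fin n) → Prop) [DecidablePred p] :
    (Finset.univ.filter p).card
      = ∑ i : Fin r, (Finset.univ.filter fun x : Fin n => p ⟨i, x⟩).card := by
  rw [Finset.card_filter, ← Finset.univ_sigma_univ, Finset.sum_sigma]
  congr 1; ext i
  rw [Finset.card_filter]

lemma exists_ceil (N m : ℕ) (hm : 0 < m) : ∃ u, N ≤ m * u ∧ m * u ≤ N + m - 1 := by
  refine ⟨(N + m - 1) / m, ?_, ?_⟩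
  · have h := Nat.div_add_mod (N + m - 1) m
    have h2 := Nat.mod_lt (N + m - 1) hm
    omega
  · have h := Nat.div_add_mod (N + m - 1) m
    omega

/-- fibers of `x ↦ m*x/n` on `Fin n` have size between `a` and `a+1`
    provided `m*a ≤ n ≤ m*(a+1)`. -/
lemma fiber_bounds (n m a j : ℕ) (hn : 0 < n) (hm : 0 < m) (hj : j < m)
    (h1 : m * a ≤ n) (h2 : n ≤ m * (a + 1)) :
    a ≤ (Finset.univ.filter fun x : Fin n => m * x.val / n = j).card ∧
    (Finset.univ.filter fun x : Fin n => m * x.val / n = j).card ≤ a + 1 := by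
  obtain ⟨u, hu1, hu2⟩ := exists_ceil (j * n) m hm
  obtain ⟨v, hv1, hv2⟩ := exists_ceil ((j + 1) * n) m hm
  have hjn : (j + 1) * n = j * n + n := by ring
  have cancel : ∀ p q : ℕ, m * p < m * (q + 1) → p ≤ q := fun p q h =>
    Nat.lt_succ_iff.mp (Nat.lt_of_mul_lt_mul_left h)
  -- v ≤ n
  have hvn : v ≤ n := by
    apply cancel
    have h3 : (j + 1) * n ≤ m * n := Nat.mul_le_mul_right n hj
    have e : m * (n + 1) = m * n + m := by ring
    omega
  have huv : u ≤ v := by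
    apply cancel
    have e : m * (v + 1) = m * v + m := by ring
    omega
  -- the fiber is the interval [u, v)
  have hset : (Finset.univ.filter fun x : Fin n => m * x.val / n = j)
      = (Finset.univ.filter fun x : Fin n => u ≤ x.val ∧ x.val < v) := by
    apply Finset.filter_congr
    intro x _
    have hx : (x : ℕ) < n := x.2
    have key1 : j * n ≤ m * x.val ↔ u ≤ x.val := by
      constructor
      · intro h
        apply cancel
        have e : m * (x.val + 1) = m * x.val + m := by ring
        omega
      · intro h
        exact le_trans hu1 (Nat.mul_le_mul_left m h)
    have key2 : m * x.val < (j + 1) * n ↔ x.val < v := by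
      constructor
      · intro h
        exact Nat.lt_of_mul_lt_mul_left (lt_of_lt_of_le h hv1)
      · intro h
        have hvpos : 1 ≤ v := by omega
        have e : m * x.val ≤ m * (v - 1) := Nat.mul_le_mul_left m (by omega)
        have e2 : m * (v - 1) + m = m * v := by
          rw [show v = (v - 1) + 1 by omega, mul_add]; simp
        omega
    constructor
    · intro h
      have e1 : j ≤ m * x.val / n := h.ge
      have e2 : m * x.val / n < j + 1 := by omega
      rw [Nat.le_div_iff_mul_le hn] at e1
      rw [Nat.div_lt_iff_lt_mul hn] at e2
      exact ⟨key1.mp e1, key2.mp e2⟩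
    · rintro ⟨hxu, hxv⟩
      have e1 := key1.mpr hxu
      have e2 := key2.mpr hxv
      rw [← Nat.le_div_iff_mul_le hn] at e1
      rw [← Nat.div_lt_iff_lt_mul hn] at e2
      omega
  rw [hset]
  have hcard : (Finset.univ.filter fun x : Fin n => u ≤ x.val ∧ x.val < v).card = v - u := by
    rw [card_filter_fin n (fun y => u ≤ y ∧ y < v)]
    have : (Finset.Iio n).filter (fun y => u ≤ y ∧ y < v) = Finset.Ico u v := by
      ext y
      simp only [Finset.mem_filter, Finset.mem_Iio, Finset.mem_Ico]
      omega
    rw [this, Nat.card_Ico]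
  rw [hcard]
  constructor
  · have : u + a ≤ v := by
      apply cancel
      have e1 : m * (u + a) = m * u + m * a := by ring
      have e2 : m * (v + 1) = m * v + m := by ring
      omega
    omega
  · have : v ≤ u + a + 1 := by
      apply cancel
      have e1 : m * (u + a + 1 + 1) = m * u + m * (a + 1) + m := by ring
      omega
    omega

lemma construct (n r k a : ℕ) (hn : 0 < n) (hr : 0 < r) (hk : r ≤ k)
    (h1 : n ≤ k / r * (a + 1))
    (h2 : ∀ i < r, kiF k r i * a ≤ n) :
    HasEquitableColoring (SimpleGraph.completeMultipartiteGraph fun _ : Fin r => Fin n) k := by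
  classical
  have hlocal : ∀ (i : Fin r) (x : Fin n), kiF k r i.val * x.val / n < kiF k r i.val := by
    intro i x
    rw [Nat.div_lt_iff_lt_mul hn, mul_comm (kiF k r i.val) n, mul_comm (kiF k r i.val) x.val]
    exact (Nat.mul_lt_mul_right (kiF_pos k r i.val hr hk)).mpr x.2
  have hcol_lt : ∀ (i : Fin r) (x : Fin n),
      offF k r i.val + kiF k r i.val * x.val / n < k := by
    intro i x
    have h3 : offF k r (i.val + 1) ≤ offF k r r := offF_mono k r i.2
    rw [offF_r k r hr] at h3
    rw [offF_succ] at h3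
    obtain ⟨D, hD, hDlt⟩ : ∃ D, kiF k r i.val * x.val / n = D ∧ D < kiF k r i.val :=
      ⟨_, rfl, hlocal i x⟩
    rw [hD]
    omega
  set col : (Σ _ : Fin r, Fin n) → ℕ :=
    fun v => offF k r v.1.val + kiF k r v.1.val * v.2.val / n with hcol
  have hcv : ∀ (i : Fin r) (x : Fin n),
      col ⟨i, x⟩ = offF k r i.val + kiF k r i.val * x.val / n := fun i x => rfl
  have hrange : ∀ (i : Fin r) (x : Fin n),
      offF k r i.val ≤ col ⟨i, x⟩ ∧ col ⟨i, x⟩ < offF k r (i.val + 1) := by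
    intro i x
    obtain ⟨D, hD, hDlt⟩ : ∃ D, kiF k r i.val * x.val / n = D ∧ D < kiF k r i.val :=
      ⟨_, rfl, hlocal i x⟩
    rw [hcv, offF_succ, hD]
    omega
  have hproper : ∀ v w : (Σ _ : Fin r, Fin n), v.1 ≠ w.1 → col v ≠ col w := by
    intro v w hvw
    obtain ⟨i, x⟩ := v
    obtain ⟨i', x'⟩ := w
    have hne : i.val ≠ i'.val := fun h => hvw (Fin.ext h)
    rcases Nat.lt_or_ge i.val i'.val with h | h
    · have h5 : offF k r (i.val + 1) ≤ offF k r i'.val := offF_mono k r h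
      have := (hrange i x).2; have := (hrange i' x').1; omega
    · have hlt : i'.val + 1 ≤ i.val := by omega
      have h5 : offF k r (i'.val + 1) ≤ offF k r i.val := offF_mono k r hlt
      have := (hrange i' x').2; have := (hrange i x).1; omega
  let C : (SimpleGraph.completeMultipartiteGraph fun _ : Fin r => Fin n).Coloring (Fin k) :=
    SimpleGraph.Coloring.mk (fun v => ⟨col v, hcol_lt v.1 v.2⟩)
      (by
        intro v w hadj heq
        have hne : v.1 ≠ w.1 := by simpa using hadj
        exact hproper v w hne (congrArg Fin.val heq))
  have hCval : ∀ (i : Fin r) (x : Fin n), (C ⟨i, x⟩ : Fin k).val = col ⟨i, x⟩ := fun i x => rfl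
  have hfib : ∀ c : Fin k,
      a ≤ (Finset.univ.filter fun v => C v = c).card ∧
      (Finset.univ.filter fun v => C v = c).card ≤ a + 1 := by
    intro c
    obtain ⟨i₀, hi₀lt, hi₀P, hnext⟩ :
        ∃ i₀, i₀ < r ∧ offF k r i₀ ≤ c.val ∧ c.val < offF k r (i₀ + 1) := by
      have hP0 : offF k r 0 ≤ c.val := by rw [offF_zero]; omega
      refine ⟨Nat.findGreatest (fun i => offF k r i ≤ c.val) r, ?_, ?_, ?_⟩
      · rcases Nat.lt_or_ge (Nat.findGreatest (fun i => offF k r i ≤ c.val) r) r with h | h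
        · exact h
        · exfalso
          have he : Nat.findGreatest (fun i => offF k r i ≤ c.val) r = r :=
            le_antisymm (Nat.findGreatest_le r) h
          have := Nat.findGreatest_spec (P := fun i => offF k r i ≤ c.val) (Nat.zero_le r) hP0
          rw [he, offF_r k r hr] at this
          exact absurd c.2 (by omega)
      · exact Nat.findGreatest_spec (P := fun i => offF k r i ≤ c.val) (Nat.zero_le r) hP0
      · by_contra hcon
        push_neg at hcon
        rcases Nat.lt_or_ge (Nat.findGreatest (fun i => offF k r i ≤ c.val) r) r with h | h
        · exact Nat.findGreatest_is_greatest
            (P := fun i => offF k r i ≤ c.val) (Nat.lt_succ_self _) (by omega) hcon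
        · have he : Nat.findGreatest (fun i => offF k r i ≤ c.val) r = r :=
            le_antisymm (Nat.findGreatest_le r) h
          have := Nat.findGreatest_spec (P := fun i => offF k r i ≤ c.val) (Nat.zero_le r) hP0
          rw [he, offF_r k r hr] at this
          exact absurd c.2 (by omega)
    have hj : c.val - offF k r i₀ < kiF k r i₀ := by
      rw [offF_succ] at hnext; omega
    rw [card_filter_sigma (fun v => C v = c)]
    rw [Finset.sum_eq_single_of_mem (⟨i₀, hi₀lt⟩ : Fin r) (Finset.mem_univ _)
      (by
        intro i _ hne
        rw [Finset.card_eq_zero, Finset.filter_eq_empty_iff]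
        intro x _
        intro hCx
        have hval : col ⟨i, x⟩ = c.val := congrArg Fin.val hCx
        have hne' : i.val ≠ i₀ := by
          intro h; apply hne; exact Fin.ext (by simp [h])
        rcases Nat.lt_or_ge i.val i₀ with h | h
        · have h5 : offF k r (i.val + 1) ≤ offF k r i₀ := offF_mono k r h
          have := (hrange i x).2; omega
        · have hlt : i₀ + 1 ≤ i.val := by omega
          have h5 : offF k r (i₀ + 1) ≤ offF k r i.val := offF_mono k r hlt
          have := (hrange i x).1; omega)]
    have hfilter : (Finset.univ.filter fun x : Fin n => C ⟨⟨i₀, hi₀lt⟩, x⟩ = c)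
        = (Finset.univ.filter fun x : Fin n =>
            kiF k r i₀ * x.val / n = c.val - offF k r i₀) := by
      apply Finset.filter_congr
      intro x _
      obtain ⟨D, hD, hDlt⟩ : ∃ D, kiF k r i₀ * x.val / n = D ∧ D < kiF k r i₀ :=
        ⟨_, rfl, hlocal ⟨i₀, hi₀lt⟩ x⟩
      have hval : (C ⟨⟨i₀, hi₀lt⟩, x⟩ : Fin k).val
          = offF k r i₀ + kiF k r i₀ * x.val / n := rfl
      rw [hD] at hval
      constructor
      · intro h
        have := congrArg Fin.val h
        rw [hval] at this
        omega
      · intro h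
        rw [hD] at h
        apply Fin.ext
        rw [hval]
        omega
    rw [hfilter]
    apply fiber_bounds n (kiF k r i₀) a (c.val - offF k r i₀) hn (kiF_pos k r i₀ hr hk) hj
    · exact h2 i₀ hi₀lt
    · calc n ≤ k / r * (a + 1) := h1
        _ ≤ kiF k r i₀ * (a + 1) := Nat.mul_le_mul_right _ (kiF_ge k r i₀)
  exact ⟨C, fun c₁ c₂ => le_trans (hfib c₁).2 (by have := (hfib c₂).1; omega)⟩

lemma mem_part (n r s k : ℕ) (hn : 1 ≤ n) (hr : 2 ≤ r)
    (hs : IsLeast {m : ℕ | 0 < m ∧ ¬ m ∣ n} s)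
    (hk : r * (n / s + 1) ≤ k) :
    HasEquitableColoring (SimpleGraph.completeMultipartiteGraph fun _ : Fin r => Fin n) k := by
  have hr0 : 0 < r := by omega
  have hs0 : 0 < s := hs.1.1
  have hdvd : ∀ m, 0 < m → m < s → m ∣ n := by
    intro m hm hms
    by_contra hc
    exact absurd (hs.2 ⟨hm, hc⟩) (by omega)
  -- generalize the divisions away
  obtain ⟨d0, hd0⟩ : ∃ d0, n / s = d0 := ⟨_, rfl⟩
  obtain ⟨e0, he0⟩ : ∃ e0, n % s = e0 := ⟨_, rfl⟩
  obtain ⟨q0, hq0⟩ : ∃ q0, k / r = q0 := ⟨_, rfl⟩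
  obtain ⟨p0, hp0⟩ : ∃ p0, k % r = p0 := ⟨_, rfl⟩
  have hnsd : s * d0 + e0 = n := by rw [← hd0, ← he0]; exact Nat.div_add_mod n s
  have hnsm : e0 < s := by rw [← he0]; exact Nat.mod_lt n hs0
  have hq : r * q0 + p0 = k := by rw [← hq0, ← hp0]; exact Nat.div_add_mod k r
  have hqm : p0 < r := by rw [← hp0]; exact Nat.mod_lt k hr0
  rw [hd0] at hk
  have hkr : r ≤ k := by
    have : r * 1 ≤ r * (d0 + 1) := Nat.mul_le_mul_left r (by omega)
    have e : r * 1 = r := by ring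
    omega
  have hk0 : 0 < k := by omega
  obtain ⟨a, ha1, ha2⟩ : ∃ a, k * a ≤ r * n ∧ r * n < k * (a + 1) := by
    refine ⟨r * n / k, ?_, ?_⟩
    · have h := Nat.div_add_mod (r * n) k
      omega
    · have h := Nat.div_add_mod (r * n) k
      have h2 := Nat.mod_lt (r * n) hk0
      have e : k * (r * n / k + 1) = k * (r * n / k) + k := by ring
      omega
  have has : a < s := by
    by_contra hc
    push_neg at hc
    have h1 : k * s ≤ k * a := Nat.mul_le_mul_left k hc
    have h2 : r * (d0 + 1) * s ≤ k * s := Nat.mul_le_mul_right s hk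
    have key : n + 1 ≤ s * d0 + s := by omega
    have h3 : r * (n + 1) ≤ r * (s * d0 + s) := Nat.mul_le_mul_left r key
    have e1 : r * (s * d0 + s) = r * (d0 + 1) * s := by ring
    have e2 : r * (n + 1) = r * n + r := by ring
    omega
  have h1 : n ≤ k / r * (a + 1) := by
    rw [hq0]
    rcases Nat.lt_or_ge (a + 1) s with hlt | hge
    · obtain ⟨e, he⟩ := hdvd (a + 1) (by omega) hlt
      have hepos : 1 ≤ e := by
        rcases Nat.eq_zero_or_pos e with h | h
        · rw [h, mul_zero] at he; omega
        · exact h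
      have hqe : e ≤ q0 := by
        by_contra hc
        push_neg at hc
        have c1 : r * q0 ≤ r * (e - 1) := Nat.mul_le_mul_left r (by omega)
        have c2 : k ≤ r * (e - 1) + r - 1 := by omega
        have c3 : k * (a + 1) ≤ (r * (e - 1) + r - 1) * (a + 1) :=
          Nat.mul_le_mul_right _ c2
        have c5 : (r * (e - 1) + r - 1) * (a + 1) + (a + 1) = (r * (e - 1) + r) * (a + 1) := by
          have h6 : r * (e - 1) + r - 1 + 1 = r * (e - 1) + r := by omega
          calc (r * (e - 1) + r - 1) * (a + 1) + (a + 1)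
              = (r * (e - 1) + r - 1 + 1) * (a + 1) := by ring
            _ = (r * (e - 1) + r) * (a + 1) := by rw [h6]
        have c6 : (r * (e - 1) + r) * (a + 1) = r * n := by
          have he1 : e - 1 + 1 = e := by omega
          calc (r * (e - 1) + r) * (a + 1) = r * ((a + 1) * (e - 1 + 1)) := by ring
            _ = r * ((a + 1) * e) := by rw [he1]
            _ = r * n := by rw [← he]
        omega
      calc n = (a + 1) * e := he
        _ ≤ (a + 1) * q0 := Nat.mul_le_mul_left _ hqe
        _ = q0 * (a + 1) := mul_comm _ _
    · have hseq : s = a + 1 := by omega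
      have hqc : d0 + 1 ≤ q0 := by
        by_contra hc
        push_neg at hc
        have c2 : r * q0 ≤ r * d0 := Nat.mul_le_mul_left r (by omega)
        have e1 : r * (d0 + 1) = r * d0 + r := by ring
        omega
      have c2 : (d0 + 1) * s ≤ q0 * s := Nat.mul_le_mul_right s hqc
      have c1 : (d0 + 1) * s = s * d0 + s := by ring
      rw [← hseq]
      omega
  have h2 : ∀ i < r, kiF k r i * a ≤ n := by
    intro i hi
    rcases Nat.eq_zero_or_pos a with ha0 | hap
    · simp [ha0]
    · obtain ⟨f, hf⟩ := hdvd a hap has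
      simp only [kiF]
      rw [hq0, hp0]
      split_ifs with hmod2
      · have c1 : (r * q0 + 1) * a ≤ k * a := Nat.mul_le_mul_right a (by omega)
        have e1 : (r * q0 + 1) * a = r * (q0 * a) + a := by ring
        have c4 : q0 * a < n := by
          by_contra hc; push_neg at hc
          have c : r * n ≤ r * (q0 * a) := Nat.mul_le_mul_left r hc
          omega
        have c5 : q0 < f := by
          by_contra hc; push_neg at hc
          have c : a * f ≤ a * q0 := Nat.mul_le_mul_left a hc
          have e : a * q0 = q0 * a := mul_comm _ _
          omega
        calc (q0 + 1) * a ≤ f * a := Nat.mul_le_mul_right a (by omega)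
          _ = a * f := mul_comm _ _
          _ = n := hf.symm
      · have c1 : r * q0 * a ≤ k * a := Nat.mul_le_mul_right a (by omega)
        have e1 : r * q0 * a = r * (q0 * a) := by ring
        have c4 : q0 * a ≤ n := by
          by_contra hc; push_neg at hc
          have c : r * (n + 1) ≤ r * (q0 * a) := Nat.mul_le_mul_left r (by omega)
          have e2 : r * (n + 1) = r * n + r := by ring
          omega
        have e3 : (q0 + 0) * a = q0 * a := by ring
        omega
  exact construct n r k a (by omega) hr0 hkr h1 h2

lemma ceil_div_eq (n s d e : ℕ) (hs0 : 0 < s) (hd : s * d + e = n) (he : 0 < e)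
    (hes : e < s) : ⌈(n : ℚ) / (s : ℚ)⌉₊ = d + 1 := by
  have hsq : (0 : ℚ) < s := by exact_mod_cast hs0
  rw [Nat.ceil_eq_iff (by omega)]
  constructor
  · rw [Nat.add_sub_cancel, lt_div_iff₀ hsq]
    exact_mod_cast (show d * s < n by
      have e2 : d * s = s * d := mul_comm _ _
      omega)
  · rw [div_le_iff₀ hsq]
    exact_mod_cast (show n ≤ (d + 1) * s by
      have e2 : (d + 1) * s = s * d + s := by ring
      omega)

lemma not_mem (n r s : ℕ) (hn : 1 ≤ n) (hr : 2 ≤ r)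
    (hs : IsLeast {m : ℕ | 0 < m ∧ ¬ m ∣ n} s) :
    ¬ HasEquitableColoring (SimpleGraph.completeMultipartiteGraph fun _ : Fin r => Fin n)
      (r * (n / s + 1) - 1) := by
  classical
  have hr0 : 0 < r := by omega
  have hs0 : 0 < s := hs.1.1
  have hs1 : ¬ s ∣ n := hs.1.2
  obtain ⟨d0, hd0⟩ : ∃ d0, n / s = d0 := ⟨_, rfl⟩
  obtain ⟨e0, he0⟩ : ∃ e0, n % s = e0 := ⟨_, rfl⟩
  have hnsd : s * d0 + e0 = n := by rw [← hd0, ← he0]; exact Nat.div_add_mod n s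
  have hnsm : e0 < s := by rw [← he0]; exact Nat.mod_lt n hs0
  have he0pos : 0 < e0 := by
    rcases Nat.eq_zero_or_pos e0 with h | h
    · exact absurd (Nat.dvd_of_mod_eq_zero (by omega)) hs1
    · exact h
  rw [hd0]
  have hKpos : 0 < r * (d0 + 1) - 1 := by
    have : 2 * 1 ≤ r * (d0 + 1) := Nat.mul_le_mul hr (by omega)
    omega
  rintro ⟨C, hC⟩
  have key : ∀ v w : (Σ _ : Fin r, Fin n), C v = C w → v.1 = w.1 := by
    intro v w h
    by_contra hne
    exact C.valid hne h
  obtain ⟨c₀, _, hc₀⟩ := Finset.exists_min_image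
    (Finset.univ : Finset (Fin (r * (d0 + 1) - 1)))
    (fun c => (Finset.univ.filter fun v => C v = c).card) ⟨⟨0, hKpos⟩, Finset.mem_univ _⟩
  have hlb : ∀ c, (Finset.univ.filter fun v => C v = c₀).card
      ≤ (Finset.univ.filter fun v => C v = c).card := fun c => hc₀ c (Finset.mem_univ c)
  have hub : ∀ c, (Finset.univ.filter fun v => C v = c).card
      ≤ (Finset.univ.filter fun v => C v = c₀).card + 1 := fun c => hC c c₀
  obtain ⟨b, hb⟩ : ∃ b, (Finset.univ.filter fun v => C v = c₀).card = b := ⟨_, rfl⟩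
  rw [hb] at hlb hub
  set A : Fin r → Finset (Fin (r * (d0 + 1) - 1)) :=
    fun i => Finset.univ.filter fun c => ∃ x : Fin n, C ⟨i, x⟩ = c with hA
  have hmemA : ∀ (i : Fin r) c, c ∈ A i ↔ ∃ x : Fin n, C ⟨i, x⟩ = c := by
    intro i c; rw [hA]; simp
  have hfib : ∀ i : Fin r,
      ∑ c, (Finset.univ.filter fun x : Fin n => C ⟨i, x⟩ = c).card = n := by
    intro i
    have h := Finset.card_eq_sum_card_fiberwise
      (s := (Finset.univ : Finset (Fin n))) (t := Finset.univ)
      (f := fun x => C ⟨i, x⟩) (fun x _ => Finset.mem_univ _)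
    simpa using h.symm
  have hterm : ∀ (i : Fin r) (c), (∃ x : Fin n, C ⟨i, x⟩ = c) →
      (Finset.univ.filter fun x : Fin n => C ⟨i, x⟩ = c).card
        = (Finset.univ.filter fun v => C v = c).card := by
    rintro i c ⟨x₀, hx₀⟩
    rw [card_filter_sigma (fun v => C v = c)]
    rw [Finset.sum_eq_single_of_mem i (Finset.mem_univ _)]
    intro i' _ hne
    rw [Finset.card_eq_zero, Finset.filter_eq_empty_iff]
    intro x _ hCx
    exact hne (key ⟨i', x⟩ ⟨i, x₀⟩ (hCx.trans hx₀.symm))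
  have hzero : ∀ (i : Fin r) (c), (¬ ∃ x : Fin n, C ⟨i, x⟩ = c) →
      (Finset.univ.filter fun x : Fin n => C ⟨i, x⟩ = c).card = 0 := by
    intro i c h
    rw [Finset.card_eq_zero, Finset.filter_eq_empty_iff]
    intro x _ hx
    exact h ⟨x, hx⟩
  have hsumA : ∀ i : Fin r,
      ∑ c ∈ A i, (Finset.univ.filter fun v => C v = c).card = n := by
    intro i
    have hAi : A i = Finset.univ.filter (fun c => ∃ x : Fin n, C ⟨i, x⟩ = c) := rfl
    refine Eq.trans ?_ (hfib i)
    rw [hAi]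
    rw [← Finset.sum_filter_add_sum_filter_not Finset.univ
      (fun c => ∃ x : Fin n, C ⟨i, x⟩ = c)
      (fun c => (Finset.univ.filter fun x : Fin n => C ⟨i, x⟩ = c).card)]
    have h2 : ∑ c ∈ Finset.univ.filter (fun c => ¬∃ x : Fin n, C ⟨i, x⟩ = c),
        (Finset.univ.filter fun x : Fin n => C ⟨i, x⟩ = c).card = 0 :=
      Finset.sum_eq_zero fun c hc => hzero i c (Finset.mem_filter.mp hc).2
    rw [h2, add_zero]
    exact Finset.sum_congr rfl fun c hc => (hterm i c (Finset.mem_filter.mp hc).2).symm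
  have hbounds : ∀ i : Fin r, (A i).card * b ≤ n ∧ n ≤ (A i).card * (b + 1) := by
    intro i
    constructor
    · have h := Finset.card_nsmul_le_sum (A i)
        (fun c => (Finset.univ.filter fun v => C v = c).card) b (fun c _ => hlb c)
      rw [hsumA i] at h
      simpa using h
    · have h := Finset.sum_le_card_nsmul (A i)
        (fun c => (Finset.univ.filter fun v => C v = c).card) (b + 1) (fun c _ => hub c)
      rw [hsumA i] at h
      simpa using h
  have hdisj : ∀ i ∈ (Finset.univ : Finset (Fin r)), ∀ i' ∈ Finset.univ, i ≠ i' →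
      Disjoint (A i) (A i') := by
    intro i _ i' _ hne
    rw [Finset.disjoint_left]
    intro c hci hci'
    obtain ⟨x, hx⟩ := (hmemA i c).mp hci
    obtain ⟨x', hx'⟩ := (hmemA i' c).mp hci'
    exact hne (key ⟨i, x⟩ ⟨i', x'⟩ (hx.trans hx'.symm))
  rcases Nat.lt_or_ge b s with hbs | hbs
  · -- b + 1 ≤ s : each part uses at least d0 + 1 colors
    have hki : ∀ i : Fin r, d0 + 1 ≤ (A i).card := by
      intro i
      by_contra hc
      push_neg at hc
      have c1 : (A i).card * (b + 1) ≤ d0 * s := Nat.mul_le_mul (by omega) (by omega)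
      have c2 := (hbounds i).2
      have e : d0 * s = s * d0 := mul_comm _ _
      omega
    have hsum : r * (d0 + 1) ≤ ∑ i : Fin r, (A i).card := by
      have h := Finset.sum_le_sum (s := (Finset.univ : Finset (Fin r)))
        (f := fun _ => d0 + 1) (g := fun i => (A i).card) (fun i _ => hki i)
      simpa [Finset.sum_const, Finset.card_univ, mul_comm] using h
    have hcard : ∑ i : Fin r, (A i).card ≤ r * (d0 + 1) - 1 := by
      rw [← Finset.card_biUnion hdisj]
      calc (Finset.univ.biUnion A).card
          ≤ Fintype.card (Fin (r * (d0 + 1) - 1)) := Finset.card_le_univ _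
        _ = r * (d0 + 1) - 1 := Fintype.card_fin _
    omega
  · -- s ≤ b : every color class is nonempty, each part uses at most d0 colors
    have hused : ∀ c, ∃ i : Fin r, c ∈ A i := by
      intro c
      have hpos : 0 < (Finset.univ.filter fun v => C v = c).card := by
        have := hlb c; omega
      obtain ⟨v, hv⟩ := Finset.card_pos.mp hpos
      have hvc : C v = c := (Finset.mem_filter.mp hv).2
      exact ⟨v.1, (hmemA v.1 c).mpr ⟨v.2, hvc⟩⟩
    have hcover : (Finset.univ : Finset (Fin (r * (d0 + 1) - 1)))
        ⊆ Finset.univ.biUnion A := by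
      intro c _
      obtain ⟨i, hi⟩ := hused c
      exact Finset.mem_biUnion.mpr ⟨i, Finset.mem_univ _, hi⟩
    have h1 : r * (d0 + 1) - 1 ≤ ∑ i : Fin r, (A i).card := by
      calc r * (d0 + 1) - 1
          = (Finset.univ : Finset (Fin (r * (d0 + 1) - 1))).card := by
            rw [Finset.card_univ, Fintype.card_fin]
        _ ≤ (Finset.univ.biUnion A).card := Finset.card_le_card hcover
        _ ≤ ∑ i : Fin r, (A i).card := Finset.card_biUnion_le
    have hki : ∀ i : Fin r, (A i).card ≤ d0 := by
      intro i
      by_contra hc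
      push_neg at hc
      have c1 : (d0 + 1) * s ≤ (A i).card * b := Nat.mul_le_mul (by omega) (by omega)
      have c2 := (hbounds i).1
      have e : (d0 + 1) * s = s * d0 + s := by ring
      omega
    have hsum2 : ∑ i : Fin r, (A i).card ≤ r * d0 := by
      have h := Finset.sum_le_sum (s := (Finset.univ : Finset (Fin r)))
        (f := fun i => (A i).card) (g := fun _ => d0) (fun i _ => hki i)
      simpa [Finset.sum_const, Finset.card_univ, mul_comm] using h
    have e : r * (d0 + 1) = r * d0 + r := by ring
    omega

/-- Let `n ≥ 1` and `r ≥ 2` be integers and let `s*` be the minimum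
positive integer that does not divide `n`. Then the equitable chromatic threshold of
the complete `r`-partite graph with all parts of size `n` equals `r * ⌈n / s*⌉`:
this is the least `t` such that the graph has an equitable `k`-coloring for every
`k ≥ t`. -/
theorem equitable_chromatic_threshold_balanced (n r s : ℕ) (hn : 1 ≤ n) (hr : 2 ≤ r)
    (hs : IsLeast {m : ℕ | 0 < m ∧ ¬ m ∣ n} s) :
    IsLeast {t : ℕ | ∀ k : ℕ, t ≤ k →
        HasEquitableColoring
          (SimpleGraph.completeMultipartiteGraph fun _ : Fin r => Fin n) k}
      (r * ⌈(n : ℚ) / (s : ℚ)⌉₊) := by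
  have hs0 : 0 < s := hs.1.1
  have hs1 : ¬ s ∣ n := hs.1.2
  have hd := Nat.div_add_mod n s
  have hm := Nat.mod_lt n hs0
  have hm0 : n % s ≠ 0 := fun h => hs1 (Nat.dvd_of_mod_eq_zero h)
  have hceil : ⌈(n : ℚ) / (s : ℚ)⌉₊ = n / s + 1 :=
    ceil_div_eq n s (n / s) (n % s) hs0 (Nat.div_add_mod n s) (by omega) hm
  rw [hceil]
  constructor
  · intro k hk
    exact mem_part n r s k hn hr hs hk
  · intro t ht
    by_contra hc
    push_neg at hc
    exact not_mem n r s hn hr hs (ht (r * (n / s + 1) - 1) (by omega))
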